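/- For any matrix A ∈ ℂ^{n×n} with A†A invertible, the unitary matrix U = A(A†A)^{-1/2} minimizes ‖A − V‖_F² over all unitary matrices V ∈ U(n). -/

import Mathlib

open Matrix
open scoped ComplexOrder

/-- The positive semidefinite square root of a positive semidefinite matrix
(removed from Mathlib; restored here with its former definition). -/
noncomputable def Matrix.PosSemidef.sqrt {𝕜 : Type*} [RCLike 𝕜] {n : Type*} [Fintype n]
    [DecidableEq n] {A : Matrix n n 𝕜} (hA : Matrix.PosSemidef A) : Matrix n n 𝕜 :=
  (hA.1.eigenvectorUnitary : Matrix n n 𝕜) * diagonal ((↑) ∘ (√·) ∘ hA.1.eigenvalues) *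
    (star hA.1.eigenvectorUnitary : Matrix n n 𝕜)

/-- Frobenius norm squared of a complex matrix. -/
noncomputable def frobSq {n : ℕ} (A : Matrix (Fin n) (Fin n) ℂ) : ℝ :=
  (Matrix.trace (Aᴴ * A)).re

/-!
Write `S = (AᴴA)^{1/2}` and `U = A S⁻¹`, so that `U` is unitary and `UᴴA = S ⪰ 0`. For unitary `V`,
`‖A - V‖² = ‖A‖² + n - 2 Re tr (VᴴA)` and `VᴴA = (VᴴU) S`, so it suffices that
`Re tr (W S) ≤ tr S` for every unitary `W`. Diagonalising `S = Q D Qᴴ` gives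
`tr (W S) = ∑ᵢ (QᴴWQ)ᵢᵢ dᵢ`, and the entries of the unitary matrix `QᴴWQ` have modulus at most `1`.
-/

namespace Matrix

variable {𝕜 n : Type*} [RCLike 𝕜] [Fintype n] [DecidableEq n]

open scoped MatrixOrder in
theorem PosSemidef.sqrt_eq_cfcSqrt {A : Matrix n n 𝕜} (hA : A.PosSemidef) :
    hA.sqrt = CFC.sqrt A := by
  rw [CFC.sqrt_eq_cfc, cfc_nnreal_eq_real _ A, hA.1.cfc_eq, IsHermitian.cfc,
    Unitary.conjStarAlgAut_apply, PosSemidef.sqrt]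
  congr 3 with i
  simp [hA.eigenvalues_nonneg i]

open scoped MatrixOrder in
theorem PosSemidef.posSemidef_sqrt {A : Matrix n n 𝕜} (hA : A.PosSemidef) :
    hA.sqrt.PosSemidef := by
  rw [hA.sqrt_eq_cfcSqrt, ← nonneg_iff_posSemidef]
  exact CFC.sqrt_nonneg A

open scoped MatrixOrder in
theorem PosSemidef.sqrt_mul_self {A : Matrix n n 𝕜} (hA : A.PosSemidef) :
    hA.sqrt * hA.sqrt = A := by
  rw [hA.sqrt_eq_cfcSqrt]
  exact CFC.sqrt_mul_sqrt_self A hA.nonneg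

theorem PosSemidef.re_trace_unitary_mul_le {S W : Matrix n n 𝕜} (hS : S.PosSemidef)
    (hW : W ∈ unitaryGroup n 𝕜) : RCLike.re (W * S).trace ≤ RCLike.re S.trace := by
  set Q : Matrix n n 𝕜 := (hS.1.eigenvectorUnitary : Matrix n n 𝕜)
  have hQ : Q ∈ unitaryGroup n 𝕜 := hS.1.eigenvectorUnitary.2
  have hWQ : star Q * W * Q ∈ unitaryGroup n 𝕜 :=
    Submonoid.mul_mem _ (Submonoid.mul_mem _ (Unitary.star_mem hQ) hW) hQ
  have htr : (W * S).trace = ∑ i, (star Q * W * Q) i i * hS.1.eigenvalues i := by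
    conv_lhs => rw [hS.1.spectral_theorem, Unitary.conjStarAlgAut_apply]
    rw [← Matrix.mul_assoc, ← Matrix.mul_assoc, trace_mul_comm]
    simp only [← Matrix.mul_assoc, trace, diag, mul_diagonal, Function.comp_apply]
    rfl
  rw [htr, hS.1.trace_eq_sum_eigenvalues, map_sum, map_sum]
  refine Finset.sum_le_sum fun i _ => ?_
  rw [RCLike.re_mul_ofReal, RCLike.ofReal_re]
  exact mul_le_of_le_one_left (hS.eigenvalues_nonneg i)
    ((RCLike.re_le_norm _).trans (entry_norm_bound_of_unitary hWQ i i))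

theorem re_trace_conjTranspose_sub_mul_sub {A V : Matrix n n 𝕜} (hV : V ∈ unitaryGroup n 𝕜) :
    RCLike.re ((A - V)ᴴ * (A - V)).trace =
      RCLike.re (Aᴴ * A).trace + Fintype.card n - 2 * RCLike.re (Vᴴ * A).trace := by
  have hVV : Vᴴ * V = 1 := mem_unitaryGroup_iff'.mp hV
  have hAV : RCLike.re (Aᴴ * V).trace = RCLike.re (Vᴴ * A).trace := by
    rw [← conjTranspose_conjTranspose A, ← conjTranspose_mul, trace_conjTranspose,
      RCLike.star_def, RCLike.conj_re, conjTranspose_conjTranspose]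
  simp only [conjTranspose_sub, sub_mul, mul_sub, hVV, trace_sub, trace_one, map_sub, hAV,
    RCLike.natCast_re]
  ring

theorem re_trace_conjTranspose_sub_mul_sub_le_of_posSemidef {A U V : Matrix n n 𝕜}
    (hU : U ∈ unitaryGroup n 𝕜) (hUA : (Uᴴ * A).PosSemidef) (hV : V ∈ unitaryGroup n 𝕜) :
    RCLike.re ((A - U)ᴴ * (A - U)).trace ≤ RCLike.re ((A - V)ᴴ * (A - V)).trace := by
  have hUU : U * Uᴴ = 1 := mem_unitaryGroup_iff.mp hU
  have hVA : Vᴴ * A = (Vᴴ * U) * (Uᴴ * A) := by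
    rw [Matrix.mul_assoc, ← Matrix.mul_assoc U, hUU, Matrix.one_mul]
  have hre : RCLike.re (Vᴴ * A).trace ≤ RCLike.re (Uᴴ * A).trace :=
    hVA ▸ hUA.re_trace_unitary_mul_le (Submonoid.mul_mem _ (Unitary.star_mem hV) hU)
  rw [re_trace_conjTranspose_sub_mul_sub hU, re_trace_conjTranspose_sub_mul_sub hV]
  linarith

theorem conjTranspose_mul_inv_mul_self {A S : Matrix n n 𝕜} (hS : S.IsHermitian)
    (hSS : S * S = Aᴴ * A) (hdet : IsUnit S.det) : (A * S⁻¹)ᴴ * A = S := by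
  rw [conjTranspose_mul, conjTranspose_nonsing_inv, hS.eq, Matrix.mul_assoc, ← hSS,
    ← Matrix.mul_assoc, nonsing_inv_mul _ hdet, Matrix.one_mul]

theorem mul_inv_mem_unitaryGroup {A S : Matrix n n 𝕜} (hS : S.IsHermitian)
    (hSS : S * S = Aᴴ * A) (hdet : IsUnit S.det) : A * S⁻¹ ∈ unitaryGroup n 𝕜 := by
  rw [mem_unitaryGroup_iff', star_eq_conjTranspose, ← Matrix.mul_assoc,
    conjTranspose_mul_inv_mul_self hS hSS hdet, mul_nonsing_inv _ hdet]

end Matrix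

/-- For any matrix `A` with `AᴴA` invertible, the matrix `A (AᴴA)^{-1/2}` minimizes
`‖A − V‖_F²` over all unitary matrices `V`. -/
theorem polar_factor_is_closest_unitary {n : ℕ} (A : Matrix (Fin n) (Fin n) ℂ)
    (hinv : IsUnit (Aᴴ * A).det) :
    ∀ V ∈ Matrix.unitaryGroup (Fin n) ℂ,
      frobSq (A - A * ((Matrix.posSemidef_conjTranspose_mul_self A).sqrt)⁻¹) ≤
        frobSq (A - V) := by
  intro V hV
  have hA := posSemidef_conjTranspose_mul_self A
  have hS := hA.posSemidef_sqrt
  have hSS := hA.sqrt_mul_self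
  have hdet : IsUnit hA.sqrt.det := isUnit_of_mul_isUnit_left (by rwa [← det_mul, hSS])
  have hUA := conjTranspose_mul_inv_mul_self hS.1 hSS hdet
  simpa only [frobSq, RCLike.re_to_complex] using
    re_trace_conjTranspose_sub_mul_sub_le_of_posSemidef
      (mul_inv_mem_unitaryGroup hS.1 hSS hdet) (by rwa [hUA]) hV
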